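/- The result of the collapsing procedure on the cycle does not depend on the order in which the elements of S are processed: for all N ≥ 1, all subsets S, T of ℤ/N with |S| + |T| ≤ N, and any two linear orderings of S, the collapsing procedure applied with the two orderings produces the same configuration. -/

import Mathlib

/-- A site of the cycle is occupied by a particle, an anti-particle, or is empty. -/
inductive Site where
  | particle : Site
  | anti : Site
  | empty : Site
deriving DecidableEq

/-- The first unoccupied site reached from `p` by moving cyclically to the left
(direction of decreasing index), given the set `occ` of occupied sites:
`p - k` for the least `k ≥ 0` (with `k < N`) such that `p - k` is unoccupied. -/
def targetSite (N : ℕ) [NeZero N] (occ : Finset (ZMod N)) (p : ZMod N) : Option (ZMod N) :=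
  ((List.range N).find? fun k => decide ((p - (k : ZMod N)) ∉ occ)).map
    fun k => p - (k : ZMod N)

/-- Process a single element `p` of `S`: place a particle at `p` if unoccupied,
else at the first unoccupied site cyclically to the left of `p`.  Here `T` is the
set of anti-particles and `P` the set of particles placed so far. -/
def placeOne (N : ℕ) [NeZero N] (T : Finset (ZMod N)) (P : Finset (ZMod N)) (p : ZMod N) :
    Finset (ZMod N) :=
  match targetSite N (T ∪ P) p with
  | some q => insert q P
  | none => P

/-- The set of particle positions produced by the collapsing procedure, processing
the elements of `S` in the order given by the list `L`. -/
def collapseParticles (N : ℕ) [NeZero N] (T : Finset (ZMod N)) (L : List (ZMod N)) :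
    Finset (ZMod N) :=
  L.foldl (placeOne N T) ∅

/-- The configuration with anti-particles at `T` and particles at `P`. -/
def configOf (N : ℕ) [NeZero N] (T P : Finset (ZMod N)) : ZMod N → Site :=
  fun a => if a ∈ T then Site.anti else if a ∈ P then Site.particle else Site.empty

section Aux

variable (N : ℕ) [NeZero N]

private lemma sub_cast_val (p s : ZMod N) : p - (((p - s).val : ℕ) : ZMod N) = s := by
  rw [ZMod.natCast_val, ZMod.cast_id, sub_sub_cancel]

private lemma targetSite_def' (occ : Finset (ZMod N)) (p : ZMod N) :
    targetSite N occ p =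
      ((List.range N).find? (fun k : ℕ => decide ((p - (k : ZMod N)) ∉ occ))).map
        (fun k : ℕ => p - (k : ZMod N)) := by
  rw [targetSite]
  show (Option.map _ (List.find? _ ((List.range N).flatMap fun a : ℕ => [((a : ZMod N))]))) = _
  rw [← List.map_eq_flatMap, List.find?_map, Option.map_map]
  rfl

private lemma targetSite_eq_some_iff (occ : Finset (ZMod N)) (p s : ZMod N) :
    targetSite N occ p = some s ↔
      s ∉ occ ∧ ∀ t : ZMod N, t ∉ occ → (p - s).val ≤ (p - t).val := by
  constructor
  · intro h
    rw [targetSite_def', Option.map_eq_some_iff] at h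
    obtain ⟨k, hk, rfl⟩ := h
    rw [List.find?_range_eq_some] at hk
    obtain ⟨hpk, hkN, hmin⟩ := hk
    simp only [decide_eq_true_eq] at hpk
    rw [List.mem_range] at hkN
    have hval : (p - (p - (k : ZMod N))).val = k := by
      rw [sub_sub_cancel, ZMod.val_cast_of_lt hkN]
    refine ⟨hpk, fun t ht => ?_⟩
    rw [hval]
    by_contra hlt
    push_neg at hlt
    have := hmin (p - t).val hlt
    simp only [Bool.not_eq_true', decide_eq_false_iff_not, not_not] at this
    rw [sub_cast_val] at this
    exact ht this
  · rintro ⟨hs, hmin⟩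
    rw [targetSite_def', Option.map_eq_some_iff]
    refine ⟨(p - s).val, ?_, sub_cast_val N p s⟩
    rw [List.find?_range_eq_some]
    refine ⟨?_, ?_, ?_⟩
    · simp only [decide_eq_true_eq]
      rw [sub_cast_val]; exact hs
    · rw [List.mem_range]; exact ZMod.val_lt _
    · intro j hj
      simp only [Bool.not_eq_true', decide_eq_false_iff_not, not_not]
      by_contra hfree
      have := hmin _ hfree
      rw [sub_sub_cancel,
        ZMod.val_cast_of_lt (lt_trans hj (ZMod.val_lt _))] at this
      omega

private lemma targetSite_eq_none_iff (occ : Finset (ZMod N)) (p : ZMod N) :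
    targetSite N occ p = none ↔ ∀ t : ZMod N, t ∈ occ := by
  rw [targetSite_def', Option.map_eq_none_iff, List.find?_eq_none]
  constructor
  · intro h t
    have := h (p - t).val (by rw [List.mem_range]; exact ZMod.val_lt _)
    simp only [decide_eq_true_eq, not_not] at this
    rwa [sub_cast_val] at this
  · intro h k _
    simp [h]

private lemma val_shift {A : Finset (ZMod N)} {x : ZMod N} (b : ZMod N)
    (hb : ∀ t ∉ A, (b - x).val ≤ (b - t).val)
    {t : ZMod N} (ht : t ∉ (insert x A : Finset (ZMod N))) :
    (b - t).val = (b - x).val + (x - t).val := by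
  simp only [Finset.mem_insert, not_or] at ht
  obtain ⟨htx, htA⟩ := ht
  have h1 : (b - x).val ≤ (b - t).val := hb t htA
  have h2 : (b - x).val ≠ (b - t).val := by
    intro h
    apply htx
    have hx : b - (((b - x).val : ℕ) : ZMod N) = x := sub_cast_val N b x
    have htt : b - (((b - t).val : ℕ) : ZMod N) = t := sub_cast_val N b t
    rw [← htt, ← h, hx]
  have hlt : (b - x).val < (b - t).val := lt_of_le_of_ne h1 h2
  have hxt : (x - t : ZMod N) = (((b - t).val - (b - x).val : ℕ) : ZMod N) := by
    rw [Nat.cast_sub h1, ZMod.natCast_val, ZMod.natCast_val, ZMod.cast_id, ZMod.cast_id]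
    ring
  rw [hxt, ZMod.val_cast_of_lt (by have := ZMod.val_lt (b - t); omega)]
  omega

private lemma placeOne_comm (T P : Finset (ZMod N)) (p q : ZMod N) :
    placeOne N T (placeOne N T P p) q = placeOne N T (placeOne N T P q) p := by
  set A := T ∪ P with hA
  rcases hp : targetSite N A p with _ | x <;> rcases hq : targetSite N A q with _ | y
  · simp only [placeOne, ← hA, hp, hq]
  · exfalso
    rw [targetSite_eq_none_iff] at hp
    rw [targetSite_eq_some_iff] at hq
    exact hq.1 (hp y)
  · exfalso
    rw [targetSite_eq_none_iff] at hq
    rw [targetSite_eq_some_iff] at hp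
    exact hp.1 (hq x)
  · rw [targetSite_eq_some_iff] at hp hq
    obtain ⟨hx1, hx2⟩ := hp
    obtain ⟨hy1, hy2⟩ := hq
    have hpx : targetSite N A p = some x := by rw [targetSite_eq_some_iff]; exact ⟨hx1, hx2⟩
    have hqy : targetSite N A q = some y := by rw [targetSite_eq_some_iff]; exact ⟨hy1, hy2⟩
    by_cases hxy : x = y
    · subst hxy
      -- both target x; first placement is insert x P in either order
      have step1 : placeOne N T P p = insert x P := by simp only [placeOne, ← hA, hpx]
      have step2 : placeOne N T P q = insert x P := by simp only [placeOne, ← hA, hqy]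
      rw [step1, step2]
      have hocc : T ∪ insert x P = insert x A := by rw [hA, Finset.union_insert]
      rcases hz : targetSite N (insert x A) q with _ | z
      · have hzp : targetSite N (insert x A) p = none := by
          rw [targetSite_eq_none_iff] at hz ⊢; exact hz
        simp only [placeOne, hocc, hz, hzp]
      · have hzp : targetSite N (insert x A) p = some z := by
          rw [targetSite_eq_some_iff] at hz ⊢
          obtain ⟨hz1, hz2⟩ := hz
          refine ⟨hz1, fun t ht => ?_⟩
          rw [val_shift N p hx2 ht, val_shift N p hx2 hz1]
          have := hz2 t ht
          rw [val_shift N q hy2 ht, val_shift N q hy2 hz1] at this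
          omega
        simp only [placeOne, hocc, hz, hzp]
    · -- distinct targets: orders don't interfere
      have step1 : placeOne N T P p = insert x P := by simp only [placeOne, ← hA, hpx]
      have step2 : placeOne N T P q = insert y P := by simp only [placeOne, ← hA, hqy]
      rw [step1, step2]
      have hoccx : T ∪ insert x P = insert x A := by rw [hA, Finset.union_insert]
      have hoccy : T ∪ insert y P = insert y A := by rw [hA, Finset.union_insert]
      have h1 : targetSite N (insert x A) q = some y := by
        rw [targetSite_eq_some_iff]
        refine ⟨?_, fun t ht => ?_⟩
        · simp only [Finset.mem_insert, not_or]
          exact ⟨fun h => hxy h.symm, hy1⟩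
        · simp only [Finset.mem_insert, not_or] at ht
          exact hy2 t ht.2
      have h2 : targetSite N (insert y A) p = some x := by
        rw [targetSite_eq_some_iff]
        refine ⟨?_, fun t ht => ?_⟩
        · simp only [Finset.mem_insert, not_or]
          exact ⟨hxy, hx1⟩
        · simp only [Finset.mem_insert, not_or] at ht
          exact hx2 t ht.2
      simp only [placeOne, hoccx, hoccy, h1, h2]
      exact Finset.insert_comm y x P

end Aux

/-- The collapsing procedure on the cycle ℤ/N does not depend on the order in which
the elements of S are processed: for all N ≥ 1, subsets S, T with |S| + |T| ≤ N and
any two linear orderings (enumerations without repetition) L₁, L₂ of S, the resulting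
configurations coincide. -/
theorem collapse_order_independent (N : ℕ) [NeZero N]
    (S T : Finset (ZMod N)) (hST : S.card + T.card ≤ N)
    (L₁ L₂ : List (ZMod N))
    (h₁ : L₁.Nodup) (h₁S : L₁.toFinset = S)
    (h₂ : L₂.Nodup) (h₂S : L₂.toFinset = S) :
    configOf N T (collapseParticles N T L₁) = configOf N T (collapseParticles N T L₂) := by
  have hperm : L₁.Perm L₂ :=
    List.perm_of_nodup_nodup_toFinset_eq h₁ h₂ (h₁S.trans h₂S.symm)
  have : collapseParticles N T L₁ = collapseParticles N T L₂ :=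
    hperm.foldl_eq' (fun x _ y _ z => placeOne_comm N T z x y) ∅
  rw [this]
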